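/- Let V ⊆ ℝⁿ be a C¹ submanifold, g : ℝⁿ → ℝ a C¹ function whose restriction to V has no critical points on V \ {0}, and f : ℝⁿ → ℝ another C¹ function with f(0) = 0. Let γ : [0, ν) → ℝⁿ be a C¹ curve with γ(0) = 0, γ((0,ν)) ⊆ V, g(γ(t)) = 0 for all t, γ'(t) tangent to V at γ(t), and suppose for each t ∈ (0,ν) the tangential gradients ∇f|_V(γ(t)) and ∇g|_V(γ(t)) are linearly dependent. Then f(γ(t)) = 0 for all t ∈ [0, ν). -/

import Mathlib

/-!
Along the curve `g ∘ γ ≡ 0`, so `∇g(γ t)` is orthogonal to `γ'(t)`; since `γ'(t)` lies in the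
tangent space, so is the tangential gradient `∇g|_V(γ t)`, its orthogonal projection. This tangential gradient does not
vanish, so the linear dependence makes `∇f|_V(γ t)` a multiple of it, whence `(f ∘ γ)' = 0` on
`(0, ν)`. By continuity at `0`, `f ∘ γ` keeps the value `f 0 = 0`.
-/

open scoped RealInnerProductSpace

theorem exists_eq_smul_of_smul_add_smul_eq_zero {K M : Type*} [Field K] [AddCommGroup M]
    [Module K M] {a b : K} {x y : M} (hab : (a, b) ≠ (0, 0)) (hxy : a • x + b • y = 0)
    (hy : y ≠ 0) : ∃ c : K, x = c • y := by
  have ha : a ≠ 0 := by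
    rintro rfl
    have hb : b ≠ 0 := fun hb => hab (by rw [hb])
    rw [zero_smul, zero_add, smul_eq_zero] at hxy
    exact hy (hxy.resolve_left hb)
  refine ⟨-(b / a), ?_⟩
  rw [← smul_right_inj ha, smul_smul, mul_neg, mul_div_cancel₀ b ha, neg_smul,
    eq_neg_iff_add_eq_zero, hxy]

theorem Submodule.inner_starProjection_left_of_mem {E : Type*} [NormedAddCommGroup E]
    [InnerProductSpace ℝ E] (K : Submodule ℝ E) [K.HasOrthogonalProjection] (w : E) {v : E}
    (hv : v ∈ K) : ⟪K.starProjection w, v⟫ = ⟪w, v⟫ := by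
  rw [K.inner_starProjection_left_eq_right, K.starProjection_eq_self_iff.mpr hv]

theorem HasGradientAt.comp_hasDerivAt {E : Type*} [NormedAddCommGroup E] [InnerProductSpace ℝ E]
    [CompleteSpace E] {h : E → ℝ} {h' : E} {γ : ℝ → E} {γ' : E} {t : ℝ}
    (hh : HasGradientAt h h' (γ t)) (hγ : HasDerivAt γ γ' t) :
    HasDerivAt (h ∘ γ) ⟪h', γ'⟫ t := by
  simpa using hh.hasFDerivAt.comp_hasDerivAt t hγ

theorem eq_of_continuousOn_Icc_of_hasDerivAt_zero {φ : ℝ → ℝ} {a b : ℝ} (hab : a ≤ b)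
    (hφ : ContinuousOn φ (Set.Icc a b)) (hφ' : ∀ x ∈ Set.Ioo a b, HasDerivAt φ 0 x) :
    φ b = φ a := by
  rcases hab.eq_or_lt with rfl | hlt
  · rfl
  obtain ⟨c, -, hc⟩ := exists_hasDerivAt_eq_slope φ (fun _ => 0) hlt hφ hφ'
  rw [eq_comm, div_eq_zero_iff, sub_eq_zero] at hc
  exact hc.resolve_right (sub_ne_zero.mpr hlt.ne')

theorem stmt9_general {n : ℕ} (V : Set (EuclideanSpace ℝ (Fin n)))
    (f g : EuclideanSpace ℝ (Fin n) → ℝ)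
    (hf : ContDiff ℝ 1 f) (hg : ContDiff ℝ 1 g) (hf0 : f 0 = 0)
    (T : EuclideanSpace ℝ (Fin n) → Submodule ℝ (EuclideanSpace ℝ (Fin n)))
    (hnocrit : ∀ p ∈ V, p ≠ 0 →
      (Submodule.orthogonalProjectionOnto (T p) (gradient g p) : EuclideanSpace ℝ (Fin n)) ≠ 0)
    (ν : ℝ) (γ : ℝ → EuclideanSpace ℝ (Fin n))
    (hγ0 : γ 0 = 0)
    (hγdiff : ∀ t ∈ Set.Ico (0:ℝ) ν, DifferentiableAt ℝ γ t)
    (hγV : ∀ t ∈ Set.Ioo (0:ℝ) ν, γ t ∈ V)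
    (hγne : ∀ t ∈ Set.Ioo (0:ℝ) ν, γ t ≠ 0)
    (hgγ : ∀ t ∈ Set.Ico (0:ℝ) ν, g (γ t) = 0)
    (hγtan : ∀ t ∈ Set.Ioo (0:ℝ) ν, deriv γ t ∈ T (γ t))
    (hdep : ∀ t ∈ Set.Ioo (0:ℝ) ν, ∃ a b : ℝ, (a, b) ≠ (0, 0) ∧
      a • (Submodule.orthogonalProjectionOnto (T (γ t)) (gradient f (γ t)) : EuclideanSpace ℝ (Fin n)) +
        b • (Submodule.orthogonalProjectionOnto (T (γ t)) (gradient g (γ t)) : EuclideanSpace ℝ (Fin n)) = 0) :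
    ∀ t ∈ Set.Ico (0:ℝ) ν, f (γ t) = 0 := by
  simp only [Submodule.coe_orthogonalProjectionOnto_apply] at hnocrit hdep
  have hchain : ∀ h : EuclideanSpace ℝ (Fin n) → ℝ, ContDiff ℝ 1 h → ∀ s ∈ Set.Ioo (0:ℝ) ν,
      HasDerivAt (h ∘ γ) ⟪gradient h (γ s), deriv γ s⟫ s := fun h hh s hs =>
    ((hh.differentiable one_ne_zero _).hasGradientAt).comp_hasDerivAt
      (hγdiff s (Set.Ioo_subset_Ico_self hs)).hasDerivAt
  have hg_orth : ∀ s ∈ Set.Ioo (0:ℝ) ν, ⟪gradient g (γ s), deriv γ s⟫ = 0 := by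
    intro s hs
    have hconst : g ∘ γ =ᶠ[nhds s] fun _ => 0 :=
      Filter.eventually_of_mem (Ioo_mem_nhds hs.1 hs.2) fun r hr =>
        hgγ r (Set.Ioo_subset_Ico_self hr)
    rw [← (hchain g hg s hs).deriv, hconst.deriv_eq, deriv_const]
  have hf_orth : ∀ s ∈ Set.Ioo (0:ℝ) ν, ⟪gradient f (γ s), deriv γ s⟫ = 0 := by
    intro s hs
    obtain ⟨a, b, hab, hab_dep⟩ := hdep s hs
    obtain ⟨c, hc⟩ := exists_eq_smul_of_smul_add_smul_eq_zero hab hab_dep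
      (hnocrit _ (hγV s hs) (hγne s hs))
    have htan := hγtan s hs
    rw [← Submodule.inner_starProjection_left_of_mem _ _ htan, hc, inner_smul_left,
      Submodule.inner_starProjection_left_of_mem _ _ htan, hg_orth s hs, mul_zero]
  intro t ht
  have hcont : ContinuousOn (f ∘ γ) (Set.Icc 0 t) :=
    hf.continuous.comp_continuousOn fun s hs =>
      (hγdiff s ⟨hs.1, hs.2.trans_lt ht.2⟩).continuousAt.continuousWithinAt
  have hconst := eq_of_continuousOn_Icc_of_hasDerivAt_zero ht.1 hcont fun s hs => by
    simpa only [hf_orth s ⟨hs.1, hs.2.trans ht.2⟩] using hchain f hf s ⟨hs.1, hs.2.trans ht.2⟩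
  simpa only [Function.comp_apply, hγ0, hf0] using hconst

theorem stmt9 {n : ℕ} (V : Set (EuclideanSpace ℝ (Fin n)))
    (f g : EuclideanSpace ℝ (Fin n) → ℝ)
    (hf : ContDiff ℝ 1 f) (hg : ContDiff ℝ 1 g) (hf0 : f 0 = 0)
    (T : EuclideanSpace ℝ (Fin n) → Submodule ℝ (EuclideanSpace ℝ (Fin n)))
    (hnocrit : ∀ p ∈ V, p ≠ 0 →
      (Submodule.orthogonalProjectionOnto (T p) (gradient g p) : EuclideanSpace ℝ (Fin n)) ≠ 0)
    (ν : ℝ) (hν : 0 < ν) (γ : ℝ → EuclideanSpace ℝ (Fin n))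
    (hγ0 : γ 0 = 0)
    (hγdiff : ∀ t ∈ Set.Ico (0:ℝ) ν, DifferentiableAt ℝ γ t)
    (hγV : ∀ t ∈ Set.Ioo (0:ℝ) ν, γ t ∈ V)
    (hγne : ∀ t ∈ Set.Ioo (0:ℝ) ν, γ t ≠ 0)
    (hgγ : ∀ t ∈ Set.Ico (0:ℝ) ν, g (γ t) = 0)
    (hγtan : ∀ t ∈ Set.Ioo (0:ℝ) ν, deriv γ t ∈ T (γ t))
    (hdep : ∀ t ∈ Set.Ioo (0:ℝ) ν, ∃ a b : ℝ, (a, b) ≠ (0, 0) ∧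
      a • (Submodule.orthogonalProjectionOnto (T (γ t)) (gradient f (γ t)) : EuclideanSpace ℝ (Fin n)) +
        b • (Submodule.orthogonalProjectionOnto (T (γ t)) (gradient g (γ t)) : EuclideanSpace ℝ (Fin n)) = 0) :
    ∀ t ∈ Set.Ico (0:ℝ) ν, f (γ t) = 0 :=
  stmt9_general V f g hf hg hf0 T hnocrit ν γ hγ0 hγdiff hγV hγne hgγ hγtan hdep
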